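/- arXiv:2006.15558 — 2 statements merged into one kernel-verified Lean document; each statement's English description precedes it below -/
import Mathlib

section
/- Let X be a finite set with N elements and let f be a partial injection of X (an injective map from a subset dom(f) ⊆ X to X). Let M be the N × N 0-1 matrix over ℂ with M_{ij} = 1 if f(x_i) = x_j and M_{ij} = 0 otherwise. Then the number of non-zero eigenvalues of M, counted with algebraic multiplicity (i.e. N minus the multiplicity of 0 as a root of the characteristic polynomial of M), equals the cardinality of the set S(f) = {x ∈ X : x ∈ dom(f^m) for all m ≥ 1} of points that survive under all powers of f. -/
/-- A partial injection of `X`, encoded as `X → Option X` injective on its domain. -/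
def IsPInj {X : Type*} (f : X → Option X) : Prop :=
  ∀ ⦃x y z : X⦄, f x = some z → f y = some z → x = y

/-- The set of partial injections (partial bijections) of `X`;
for `X = Fin d` this is the symmetric inverse semigroup `I_d`. -/
abbrev PInj (X : Type*) := {f : X → Option X // IsPInj f}

instance {X : Type*} [Fintype X] [DecidableEq X] : DecidablePred (IsPInj (X := X)) :=
  fun _ => by unfold IsPInj; infer_instance

/-- Iterate of a partial map: `pIter g m` is the `m`-th power of `g` as a partial map,
with `dom (f ∘ g) = {x ∈ dom f : f x ∈ dom g}`. -/
def pIter {α : Type*} (g : α → Option α) : ℕ → α → Option α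
  | 0, x => some x
  | m + 1, x => (g x).bind (pIter g m)

section Aux

variable {α : Type*}

/-- A point survives if it is in the domain of every power. -/
def Surv (g : α → Option α) (x : α) : Prop :=
  ∀ m : ℕ, 1 ≤ m → (pIter g m x).isSome

lemma pIter_one (g : α → Option α) (x : α) : pIter g 1 x = g x := by
  cases h : g x <;> simp [pIter, h]

lemma pIter_succ_of_some (g : α → Option α) {x y : α} (h : g x = some y) (m : ℕ) :
    pIter g (m + 1) x = pIter g m y := by
  simp [pIter, h]

lemma pIter_add (g : α → Option α) (a b : ℕ) (x : α) :
    pIter g (a + b) x = (pIter g a x).bind (pIter g b) := by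
  induction a generalizing x with
  | zero => simp [pIter]
  | succ a ih =>
    rw [Nat.succ_add]
    cases hgx : g x with
    | none => simp [pIter, hgx]
    | some y => simp [pIter, hgx, ih]

lemma isSome_pIter_of_add {g : α → Option α} {a b : ℕ} {x : α}
    (h : (pIter g (a + b) x).isSome) : (pIter g a x).isSome := by
  rw [pIter_add] at h
  cases h' : pIter g a x with
  | none => rw [h'] at h; simp at h
  | some y => rfl

lemma surv_iff (g : α → Option α) (x : α) :
    Surv g x ↔ ∃ y, g x = some y ∧ Surv g y := by
  constructor
  · intro h
    have h1 := h 1 le_rfl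
    rw [pIter_one] at h1
    obtain ⟨y, hy⟩ := Option.isSome_iff_exists.mp h1
    refine ⟨y, hy, fun m hm => ?_⟩
    have := h (m + 1) (by omega)
    rwa [pIter_succ_of_some g hy m] at this
  · rintro ⟨y, hy, hs⟩ m hm
    obtain ⟨k, rfl⟩ : ∃ k, m = k + 1 := ⟨m - 1, by omega⟩
    rw [pIter_succ_of_some g hy k]
    rcases Nat.eq_zero_or_pos k with rfl | hk
    · simp [pIter]
    · exact hs k hk

lemma pIter_card_eq_none [Fintype α] (g : α → Option α) {x : α} (hx : ¬ Surv g x) :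
    pIter g (Fintype.card α) x = none := by
  by_contra h
  have hall : ∀ m, m ≤ Fintype.card α → (pIter g m x).isSome := by
    intro m hm
    obtain ⟨k, hk⟩ := Nat.exists_eq_add_of_le hm
    exact isSome_pIter_of_add (a := m) (b := k)
      (by rw [← hk]; exact Option.ne_none_iff_isSome.mp h)
  set v : Fin (Fintype.card α + 1) → α :=
    fun i => (pIter g i.1 x).get (hall i.1 (by omega)) with hv
  obtain ⟨i, j, hij, hvij⟩ := Fintype.exists_ne_map_eq_of_card_lt v (by simp)
  -- wlog i < j
  wlog hlt : (i : ℕ) < (j : ℕ) generalizing i j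
  · exact this j i hij.symm hvij.symm (by omega)
  have hpi : pIter g i.1 x = some (v i) := (Option.some_get _).symm
  have hpj : pIter g j.1 x = some (v j) := (Option.some_get _).symm
  set y := v i with hy
  set d := (j : ℕ) - (i : ℕ) with hd
  have hd1 : 1 ≤ d := by omega
  have hcyc : pIter g d y = some y := by
    have : pIter g ((i : ℕ) + d) x = (pIter g i.1 x).bind (pIter g d) := pIter_add g _ _ _
    rw [show (i : ℕ) + d = (j : ℕ) by omega, hpj, hpi] at this
    simp only [Option.bind_some] at this
    rw [← this, ← hvij]
  have hcyck : ∀ k : ℕ, pIter g (k * d) y = some y := by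
    intro k
    induction k with
    | zero => simp [pIter]
    | succ k ih =>
      rw [show (k + 1) * d = k * d + d by ring, pIter_add, ih]
      simpa using hcyc
  have hsy : Surv g y := by
    intro m _
    have := hcyck m
    have hle : m ≤ m * d := Nat.le_mul_of_pos_right m (by omega)
    exact isSome_pIter_of_add (a := m) (b := m * d - m)
      (by rw [show m + (m * d - m) = m * d by omega, hcyck m]; rfl)
  apply hx
  intro m _
  rcases le_or_gt m (i : ℕ) with hmi | hmi
  · exact isSome_pIter_of_add (a := m) (b := (i : ℕ) - m)
      (by rw [show m + ((i : ℕ) - m) = (i : ℕ) by omega, hpi]; rfl)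
  · have : pIter g ((i : ℕ) + (m - (i : ℕ))) x = (pIter g i.1 x).bind (pIter g (m - (i : ℕ))) :=
      pIter_add g _ _ _
    rw [show (i : ℕ) + (m - (i : ℕ)) = m by omega, hpi] at this
    simp only [Option.bind_some] at this
    rw [this]
    exact hsy _ (by omega)

end Aux

/-- For a partial injection `f` of a finite set `X` with `N` elements and
its 0-1 action matrix `M` over `ℂ`, the number of non-zero eigenvalues of `M` counted with
algebraic multiplicity (i.e. `N` minus the multiplicity of `0` as a root of the
characteristic polynomial) equals the number of points surviving under all powers of `f`. -/
theorem card_nonzero_eigenvalues_eq_card_surviving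
    {X : Type*} [Fintype X] [DecidableEq X] (f : PInj X)
    (M : Matrix X X ℂ) (hM : ∀ i j, M i j = if f.1 i = some j then 1 else 0) :
    Fintype.card X - (M.charpoly).rootMultiplicity 0
      = Nat.card {x : X // ∀ m : ℕ, 1 ≤ m → (pIter f.1 m x).isSome} := by
  classical
  -- the surviving and dying subtypes
  have hgoal : {x : X // ∀ m : ℕ, 1 ≤ m → (pIter f.1 m x).isSome} = {x : X // Surv f.1 x} := rfl
  rw [hgoal]
  -- the successor map on surviving points
  have hsur : ∀ x : {x : X // Surv f.1 x}, ∃ y, f.1 x.1 = some y ∧ Surv f.1 y :=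
    fun x => (surv_iff f.1 x.1).mp x.2
  set g : {x : X // Surv f.1 x} → {x : X // Surv f.1 x} :=
    fun x => ⟨(hsur x).choose, (hsur x).choose_spec.2⟩ with hgdef
  have hg : ∀ x, f.1 x.1 = some (g x).1 := fun x => (hsur x).choose_spec.1
  have hginj : Function.Injective g := by
    intro a b hab
    exact Subtype.ext (f.2 (hg a) (by rw [hab]; exact hg b))
  have hgbij : Function.Bijective g := Finite.injective_iff_bijective.mp hginj
  set σ : Equiv.Perm {x : X // Surv f.1 x} := Equiv.ofBijective g hgbij with hσ
  -- blocks
  set A : Matrix {x : X // Surv f.1 x} {x : X // Surv f.1 x} ℂ := σ.permMatrix ℂ with hA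
  set D : Matrix {x : X // ¬ Surv f.1 x} {x : X // ¬ Surv f.1 x} ℂ :=
    Matrix.of (fun i j => if f.1 i.1 = some j.1 then 1 else 0) with hD
  set e : {x : X // Surv f.1 x} ⊕ {x : X // ¬ Surv f.1 x} ≃ X := Equiv.sumCompl _ with he
  -- closure of the non-surviving set
  have hclosed : ∀ (x y : X), ¬ Surv f.1 x → f.1 x = some y → ¬ Surv f.1 y :=
    fun x y hx hxy hy => hx ((surv_iff f.1 x).mpr ⟨y, hxy, hy⟩)
  -- block decomposition
  have key : (Matrix.reindex e.symm e.symm) M = Matrix.fromBlocks A 0 0 D := by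
    ext i j
    cases i with
    | inl i =>
      cases j with
      | inl j =>
        simp only [Matrix.reindex_apply, Matrix.submatrix_apply, Equiv.symm_symm,
          he, Equiv.sumCompl_apply_inl, Matrix.fromBlocks_apply₁₁, hM]
        rw [hA, Equiv.Perm.permMatrix, PEquiv.toMatrix_apply, Equiv.toPEquiv_apply]
        by_cases h : f.1 i.1 = some j.1
        · rw [if_pos h, if_pos]
          have : (g i).1 = j.1 := by
            have := hg i; rw [h] at this; exact (Option.some.injEq _ _ ▸ this).symm
          simp only [Option.mem_def, Option.some.injEq]
          exact (Subtype.ext this : σ i = j)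
        · rw [if_neg h, if_neg]
          simp only [Option.mem_def, Option.some.injEq]
          intro hc
          apply h
          have : g i = j := hc
          rw [← this]; exact hg i
      | inr j =>
        simp only [Matrix.reindex_apply, Matrix.submatrix_apply, Equiv.symm_symm,
          he, Equiv.sumCompl_apply_inl, Equiv.sumCompl_apply_inr,
          Matrix.fromBlocks_apply₁₂, Matrix.zero_apply, hM]
        rw [if_neg]
        intro h
        have : (g i).1 = j.1 := by
          have := hg i; rw [h] at this
          exact (Option.some.injEq _ _ ▸ this).symm
        exact j.2 (this ▸ (g i).2)
    | inr i =>
      cases j with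
      | inl j =>
        simp only [Matrix.reindex_apply, Matrix.submatrix_apply, Equiv.symm_symm,
          he, Equiv.sumCompl_apply_inl, Equiv.sumCompl_apply_inr,
          Matrix.fromBlocks_apply₂₁, Matrix.zero_apply, hM]
        rw [if_neg]
        exact fun h => hclosed i.1 j.1 i.2 h j.2
      | inr j =>
        simp only [Matrix.reindex_apply, Matrix.submatrix_apply, Equiv.symm_symm,
          he, Equiv.sumCompl_apply_inr, Matrix.fromBlocks_apply₂₂, hM, hD, Matrix.of_apply]
  -- powers of D
  have hDpow : ∀ (m : ℕ) (i j : {x : X // ¬ Surv f.1 x}),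
      (D ^ m) i j = if pIter f.1 m i.1 = some j.1 then 1 else 0 := by
    intro m
    induction m with
    | zero =>
      intro i j
      simp only [pow_zero, Matrix.one_apply, pIter, Option.some.injEq]
      by_cases h : i = j
      · rw [if_pos h, if_pos (by rw [h])]
      · rw [if_neg h, if_neg (fun hc => h (Subtype.ext hc))]
    | succ m ih =>
      intro i j
      rw [pow_succ', Matrix.mul_apply]
      cases hfx : f.1 i.1 with
      | none =>
        rw [show pIter f.1 (m + 1) i.1 = none by simp [pIter, hfx], if_neg (by simp)]
        apply Finset.sum_eq_zero
        intro k _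
        rw [hD, Matrix.of_apply, if_neg (by rw [hfx]; simp), zero_mul]
      | some y =>
        have hyns : ¬ Surv f.1 y := hclosed i.1 y i.2 hfx
        rw [pIter_succ_of_some f.1 hfx m]
        rw [Finset.sum_eq_single (⟨y, hyns⟩ : {x : X // ¬ Surv f.1 x})]
        · rw [hD, Matrix.of_apply, if_pos hfx, one_mul, ih]
        · intro k _ hk
          rw [hD, Matrix.of_apply, if_neg, zero_mul]
          intro hc
          apply hk
          rw [hfx] at hc
          exact Subtype.ext (Option.some.injEq _ _ ▸ hc).symm
        · intro hmem
          exact absurd (Finset.mem_univ _) hmem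
  -- D is nilpotent
  have hDnil : D ^ (Fintype.card X) = 0 := by
    ext i j
    rw [hDpow, pIter_card_eq_none f.1 i.2, if_neg (by simp), Matrix.zero_apply]
  -- charpoly of D
  have hDchar : D.charpoly = Polynomial.X ^ (Fintype.card {x : X // ¬ Surv f.1 x}) := by
    have hnil :
        IsNilpotent (D.charpoly - Polynomial.X ^ (Fintype.card {x : X // ¬ Surv f.1 x})) :=
      Matrix.isNilpotent_charpoly_sub_pow_of_isNilpotent ⟨Fintype.card X, hDnil⟩
    have h0 := hnil.eq_zero
    linear_combination (norm := ring_nf) h0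
  -- charpoly of A has nonzero constant coefficient
  have hAdet : A.det ≠ 0 := by
    rw [hA, Matrix.det_permutation]
    rcases Int.units_eq_one_or (Equiv.Perm.sign σ) with h | h <;> rw [h] <;> norm_num
  have hAcoeff : (A.charpoly).coeff 0 ≠ 0 := by
    intro hc
    apply hAdet
    rw [Matrix.det_eq_sign_charpoly_coeff, hc, mul_zero]
  have hArm : (A.charpoly).rootMultiplicity 0 = 0 := by
    apply Polynomial.rootMultiplicity_eq_zero
    intro hr
    exact hAcoeff (by rwa [Polynomial.coeff_zero_eq_eval_zero])
  -- charpoly of M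
  have hchar : M.charpoly = A.charpoly * D.charpoly := by
    rw [← Matrix.charpoly_reindex e.symm M, key, Matrix.charpoly_fromBlocks_zero₁₂]
  have hne : A.charpoly * D.charpoly ≠ 0 := by
    rw [← hchar]; exact M.charpoly_monic.ne_zero
  have hrm : (M.charpoly).rootMultiplicity 0
      = Fintype.card {x : X // ¬ Surv f.1 x} := by
    rw [hchar, Polynomial.rootMultiplicity_mul hne, hArm, zero_add, hDchar]
    rw [show (Polynomial.X : Polynomial ℂ) ^ (Fintype.card {x : X // ¬ Surv f.1 x})
        = (Polynomial.X - Polynomial.C 0) ^ (Fintype.card {x : X // ¬ Surv f.1 x}) by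
      rw [Polynomial.C_0, sub_zero]]
    exact Polynomial.rootMultiplicity_X_sub_C_pow 0 _
  rw [hrm, Fintype.card_subtype_compl, Nat.card_eq_fintype_card]
  have := Fintype.card_subtype_le (fun x : X => Surv f.1 x)
  omega
end

section
/- Let d ≥ 2, n ≥ 1 and c ≥ 1. Then Σ_{y_1, …, y_c ∈ P_n} rk(y_1 y_2 ⋯ y_c) ≤ (R'_n / d^n)^{c−1} · R_n, where the sum is over all c-tuples of elements of P_n, R_n = Σ_{y ∈ P_n} rk(y), and R'_n = Σ_{y ∈ P_n} rank(y). -/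
/-- The `n`-th partial wreath power `P_n` of the symmetric inverse semigroup `I_d`:
`P_0` is trivial and `P_{n+1} = {(f, a) : a ∈ I_d, f : dom a → P_n}`. -/
def Pn (d : ℕ) : ℕ → Type
  | 0 => PUnit
  | n + 1 => Σ a : PInj (Fin d), ({x : Fin d // (a.1 x).isSome} → Pn d n)

instance PnFintype (d : ℕ) : ∀ n, Fintype (Pn d n)
  | 0 => inferInstanceAs (Fintype PUnit)
  | n + 1 =>
      letI := PnFintype d n
      inferInstanceAs (Fintype (Σ a : PInj (Fin d), ({x : Fin d // (a.1 x).isSome} → Pn d n)))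

/-- The action of `y ∈ P_n` on the `d^n` bottom-level vertices of the `d`-regular rooted
tree with `n` levels (encoded as paths `Fin n → Fin d`), as a partial injection. -/
def Pn.act {d : ℕ} : ∀ {n : ℕ}, Pn d n → (Fin n → Fin d) → Option (Fin n → Fin d)
  | 0, _, v => some v
  | _ + 1, y, v =>
    if h : (y.1.1 (v 0)).isSome then
      (Pn.act (y.2 ⟨v 0, h⟩) (Fin.tail v)).map
        (fun w => Fin.cons ((y.1.1 (v 0)).get h) w)
    else none

/-- The ultimate rank `rk y = #S(y)`: the number of bottom-level vertices that survive
under the action of all powers of `y`. -/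
noncomputable def Pn.rk {d n : ℕ} (y : Pn d n) : ℕ :=
  Nat.card {v : Fin n → Fin d // ∀ m : ℕ, 1 ≤ m → (pIter (Pn.act y) m v).isSome}

/-- `rank y`: the number of bottom-level vertices in the domain of `y`. -/
noncomputable def Pn.rank' {d n : ℕ} (y : Pn d n) : ℕ :=
  Nat.card {v : Fin n → Fin d // (Pn.act y v).isSome}

theorem bind_isSome_left {α : Type*} {o : Option α} {g : α → Option α}
    (h : (o.bind g).isSome) : o.isSome := by
  cases o <;> simp_all

theorem bind_isSome_right {α : Type*} {o : Option α} {g : α → Option α}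
    (h : (o.bind g).isSome) : (g (o.get (bind_isSome_left h))).isSome := by
  cases o
  · exact absurd h (by simp)
  · simpa using h

/-- Composition of partial injections: apply `a` first, then `b`,
with `dom (a ∘ b) = {x ∈ dom a : a x ∈ dom b}`. -/
def PInj.comp {X : Type*} (a b : PInj X) : PInj X :=
  ⟨fun x => (a.1 x).bind b.1, by
    intro x y z hx hy
    rw [Option.bind_eq_some_iff] at hx hy
    obtain ⟨x', hax, hbx⟩ := hx
    obtain ⟨y', hay, hby⟩ := hy
    exact a.2 hax ((b.2 hbx hby) ▸ hay)⟩

/-- Multiplication in the partial wreath power: `(f, a) · (g, b) = (f gᵃ, ab)`. -/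
def Pn.mul {d : ℕ} : ∀ {n : ℕ}, Pn d n → Pn d n → Pn d n
  | 0, _, _ => PUnit.unit
  | _ + 1, y, z =>
    ⟨PInj.comp y.1 z.1, fun x =>
      Pn.mul (y.2 ⟨x.1, bind_isSome_left x.2⟩)
        (z.2 ⟨(y.1.1 x.1).get (bind_isSome_left x.2), bind_isSome_right x.2⟩)⟩

/-- The identity element of `P_n` (the everywhere-defined trivial automorphism). -/
def Pn.one (d : ℕ) : ∀ n, Pn d n
  | 0 => PUnit.unit
  | n + 1 =>
    ⟨⟨fun x => some x, fun _ _ _ h1 h2 => by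
        rw [Option.some_inj] at h1 h2; rw [h1, h2]⟩,
      fun _ => Pn.one d n⟩


section PMap
variable {α : Type*}

/-- composition of partial maps, first `f` then `g` -/
def pcomp (f g : α → Option α) : α → Option α := fun x => (f x).bind g

def Sset (w : α → Option α) (v : α) : Prop := ∀ m : ℕ, 1 ≤ m → (pIter w m v).isSome

theorem pIter_succ' (w : α → Option α) (m : ℕ) (x : α) :
    pIter w (m + 1) x = (pIter w m x).bind w := by
  induction m generalizing x with
  | zero => simp [pIter]
  | succ m ih =>
      show (w x).bind (pIter w (m+1)) = ((w x).bind (pIter w m)).bind w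
      cases w x with
      | none => rfl
      | some t => simpa using ih t

theorem orb_eq {w w' : α → Option α} (h : ∀ x, (w x).isSome → w' x = w x) :
    ∀ (m : ℕ) (v : α), (pIter w m v).isSome → pIter w' m v = pIter w m v := by
  intro m
  induction m with
  | zero => intro v _; rfl
  | succ m ih =>
      intro v hv
      show (w' v).bind (pIter w' m) = (w v).bind (pIter w m)
      have hw : (w v).isSome := by
        revert hv; show ((w v).bind (pIter w m)).isSome → _
        cases w v <;> simp
      rw [h v hw]
      obtain ⟨t, ht⟩ := Option.isSome_iff_exists.mp hw
      rw [ht]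
      simp only [Option.bind_some]
      exact ih t (by revert hv; show ((w v).bind (pIter w m)).isSome → _; rw [ht]; simp)

theorem Sset.of_orb {w w' : α → Option α} {v : α} (h : ∀ x, (w x).isSome → w' x = w x)
    (hv' : Sset w v) : Sset w' v := by
  intro m hm
  rw [orb_eq h m v (hv' m hm)]
  exact hv' m hm

theorem pcomp_shift (f g : α → Option α) (m : ℕ) (x : α) :
    (f x).bind (pIter (pcomp g f) m) = (pIter (pcomp f g) m x).bind f := by
  induction m generalizing x with
  | zero => simp [pIter]
  | succ m ih =>
      show (f x).bind (fun a => (pcomp g f a).bind (pIter (pcomp g f) m))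
        = ((pcomp f g x).bind (pIter (pcomp f g) m)).bind f
      rw [Option.bind_assoc]
      show ((f x).bind fun a => ((g a).bind f).bind (pIter (pcomp g f) m)) = _
      have : ((f x).bind fun a => ((g a).bind f).bind (pIter (pcomp g f) m))
          = ((f x).bind g).bind (fun b => (f b).bind (pIter (pcomp g f) m)) := by
        cases f x with
        | none => rfl
        | some a => simp [Option.bind_assoc]
      rw [this]
      show (pcomp f g x).bind (fun b => (f b).bind (pIter (pcomp g f) m)) = _
      cases pcomp f g x with
      | none => rfl
      | some b => simpa using ih b

theorem Sset_shift {f g : α → Option α} {v : α} (h : Sset (pcomp f g) v) :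
    ∃ hf : (f v).isSome, Sset (pcomp g f) ((f v).get hf) := by
  have h1 : (pcomp f g v).isSome := by
    have := h 1 le_rfl
    show ((pcomp f g v)).isSome
    revert this
    show ((pcomp f g v).bind (pIter (pcomp f g) 0)).isSome → _
    cases pcomp f g v <;> simp [pIter]
  have hf : (f v).isSome := by
    revert h1; show ((f v).bind g).isSome → _
    cases f v <;> simp
  refine ⟨hf, ?_⟩
  intro m _
  obtain ⟨u, hu⟩ := Option.isSome_iff_exists.mp hf
  have key : (f v).bind (pIter (pcomp g f) m) = (pIter (pcomp f g) m v).bind f :=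
    pcomp_shift f g m v
  -- show RHS isSome
  obtain ⟨x, hx⟩ := Option.isSome_iff_exists.mp (h m (by omega))
  have hfx : (f x).isSome := by
    have h2 := h (m + 1) (by omega)
    rw [pIter_succ', hx] at h2
    revert h2
    show ((pcomp f g x)).isSome → _
    show ((f x).bind g).isSome → _
    cases f x <;> simp
  have : ((f v).bind (pIter (pcomp g f) m)).isSome := by
    rw [key, hx]; simpa using hfx
  have hgu : (f v).get hf = u := by simp [hu]
  rw [hgu]
  rw [hu] at this
  simpa using this

end PMap

section Act
variable {d : ℕ}

/-- constructor helper for `Pn d (n+1)` -/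
def Pn.mk {d n : ℕ} (a : PInj (Fin d)) (f : {x : Fin d // (a.1 x).isSome} → Pn d n) :
    Pn d (n + 1) := Sigma.mk a f

theorem Pn.act_mk {n : ℕ} (a : PInj (Fin d)) (f : {x : Fin d // (a.1 x).isSome} → Pn d n)
    (v : Fin (n+1) → Fin d) :
    Pn.act (Pn.mk a f) v =
      if h : (a.1 (v 0)).isSome then
        (Pn.act (f ⟨v 0, h⟩) (Fin.tail v)).map (fun w => Fin.cons ((a.1 (v 0)).get h) w)
      else none := rfl

theorem Pn.mul_mk {n : ℕ} (a b : PInj (Fin d)) (f : {x : Fin d // (a.1 x).isSome} → Pn d n)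
    (g : {x : Fin d // (b.1 x).isSome} → Pn d n) :
    Pn.mul (Pn.mk a f) (Pn.mk b g) = Pn.mk (PInj.comp a b)
      (fun x => Pn.mul (f ⟨x.1, bind_isSome_left x.2⟩)
        (g ⟨(a.1 x.1).get (bind_isSome_left x.2), bind_isSome_right x.2⟩)) := rfl

theorem Pn.act_one {n : ℕ} (v : Fin n → Fin d) : Pn.act (Pn.one d n) v = some v := by
  induction n with
  | zero => rfl
  | succ n ih =>
      change Pn.act (Pn.mk _ _) v = some v
      rw [Pn.act_mk]
      simp only [Option.isSome_some, dif_pos]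
      rw [ih (Fin.tail v)]
      simp [Fin.cons_self_tail]

theorem Pn.act_mul : ∀ {n : ℕ} (y z : Pn d n) (v : Fin n → Fin d),
    Pn.act (Pn.mul y z) v = (Pn.act y v).bind (Pn.act z)
  | 0, _, _, _ => rfl
  | n + 1, y, z, v => by
      obtain ⟨a, f⟩ := y
      obtain ⟨b, g⟩ := z
      change Pn.act (Pn.mul (Pn.mk a f) (Pn.mk b g)) v
        = (Pn.act (Pn.mk a f) v).bind (Pn.act (Pn.mk b g))
      rw [Pn.mul_mk]
      rcases ha : a.1 (v 0) with _ | w₀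
      · have hc : ((PInj.comp a b).1 (v 0)) = none := by
          simp [PInj.comp, ha]
        rw [Pn.act_mk, Pn.act_mk]
        simp [hc, ha]
      · rcases hb : b.1 w₀ with _ | x₀
        · have hc : ((PInj.comp a b).1 (v 0)) = none := by
            simp [PInj.comp, ha, hb]
          rw [Pn.act_mk, Pn.act_mk]
          simp only [hc, ha, Option.isSome_some, Option.isSome_none, dif_pos,
            Bool.false_eq_true, dif_neg, not_false_iff]
          rcases Pn.act (f ⟨v 0, by simp [ha]⟩) (Fin.tail v) with _ | t
          · simp
          · simp only [Option.map_some, Option.bind_some]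
            rw [Pn.act_mk]
            have h0 : (Fin.cons ((a.1 (v 0)).get (by rw [ha]; rfl)) t : Fin (n+1) → Fin d) 0
                = w₀ := by simp [ha]
            simp [h0, hb]
        · have hc : (PInj.comp a b).1 (v 0) = some x₀ := by
            simp [PInj.comp, ha, hb]
          rw [Pn.act_mk, Pn.act_mk]
          simp only [hc, ha, Option.isSome_some, dif_pos, Option.get_some]
          rw [Pn.act_mul]
          rcases hft : Pn.act (f ⟨v 0, by simp [ha]⟩) (Fin.tail v) with _ | t
          next => simp
          next =>
            simp only [Option.bind_some, Option.map_some]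
            rw [Pn.act_mk]
            have h0 : (Fin.cons w₀ t : Fin (n+1) → Fin d) 0 = w₀ := by simp
            simp only [h0, hb, Option.isSome_some, dif_pos, Option.get_some, Fin.tail_cons]

end Act

section Foldl
variable {d n : ℕ}

/-- action of a list of elements, applied left to right -/
def actList : List (Pn d n) → (Fin n → Fin d) → Option (Fin n → Fin d)
  | [], x => some x
  | a :: l, x => (Pn.act a x).bind (actList l)

theorem act_foldl : ∀ (l : List (Pn d n)) (z : Pn d n) (v : Fin n → Fin d),
    Pn.act (l.foldl Pn.mul z) v = (Pn.act z v).bind (actList l)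
  | [], z, v => by
      show Pn.act z v = (Pn.act z v).bind some
      cases Pn.act z v <;> rfl
  | a :: l, z, v => by
      show Pn.act (l.foldl Pn.mul (Pn.mul z a)) v = _
      rw [act_foldl l (Pn.mul z a) v]
      rw [Pn.act_mul, Option.bind_assoc]
      rfl

theorem act_prodFn (l : List (Pn d n)) (v : Fin n → Fin d) :
    Pn.act (l.foldl Pn.mul (Pn.one d n)) v = actList l v := by
  rw [act_foldl, Pn.act_one]
  rfl

theorem pcomp_actList_one (l : List (Pn d n)) :
    pcomp (actList l) (Pn.act (Pn.one d n)) = actList l := by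
  funext x
  show (actList l x).bind (Pn.act (Pn.one d n)) = actList l x
  cases h : actList l x with
  | none => rfl
  | some t => simp [Pn.act_one]

theorem actList_cons_pcomp (a : Pn d n) (l : List (Pn d n)) (q : Pn d n) :
    pcomp (actList (a :: l)) (Pn.act q)
      = pcomp (Pn.act a) (pcomp (actList l) (Pn.act q)) := by
  funext x
  show ((Pn.act a x).bind (actList l)).bind (Pn.act q) = _
  rw [Option.bind_assoc]
  rfl

theorem pcomp_actList_mul (l : List (Pn d n)) (q a : Pn d n) :
    pcomp (pcomp (actList l) (Pn.act q)) (Pn.act a)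
      = pcomp (actList l) (Pn.act (Pn.mul q a)) := by
  funext x
  show ((actList l x).bind (Pn.act q)).bind (Pn.act a) = (actList l x).bind (Pn.act (Pn.mul q a))
  rw [Option.bind_assoc]
  cases actList l x with
  | none => rfl
  | some t => simp [Pn.act_mul]

end Foldl

section Aut
variable {d : ℕ}

/-- full (everywhere defined) automorphisms of the depth-`n` `d`-regular rooted tree -/
def Aut (d : ℕ) : ℕ → Type
  | 0 => PUnit
  | n + 1 => Equiv.Perm (Fin d) × (Fin d → Aut d n)

/-- action of a full automorphism on leaves -/
def gact : ∀ {n : ℕ}, Aut d n → (Fin n → Fin d) → (Fin n → Fin d)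
  | 0, _, v => v
  | _ + 1, g, v => Fin.cons (g.1 (v 0)) (gact (g.2 (v 0)) (Fin.tail v))

/-- inverse automorphism -/
def ginv : ∀ {n : ℕ}, Aut d n → Aut d n
  | 0, _ => PUnit.unit
  | _ + 1, g => (g.1.symm, fun i => ginv (g.2 (g.1.symm i)))

def gone : ∀ (n : ℕ), Aut d n
  | 0 => PUnit.unit
  | n + 1 => (Equiv.refl _, fun _ => gone n)

theorem gact_ginv : ∀ {n : ℕ} (g : Aut d n) (v : Fin n → Fin d),
    gact (ginv g) (gact g v) = v
  | 0, _, v => rfl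
  | n + 1, g, v => by
      show Fin.cons ((ginv g).1 ((gact g v) 0))
          (gact ((ginv g).2 ((gact g v) 0)) (Fin.tail (gact g v))) = v
      have h0 : (gact g v) 0 = g.1 (v 0) := by
        show (Fin.cons (g.1 (v 0)) _ : Fin (n+1) → Fin d) 0 = _; simp
      have ht : Fin.tail (gact g v) = gact (g.2 (v 0)) (Fin.tail v) := by
        show Fin.tail (Fin.cons _ _) = _; simp
      rw [h0, ht]
      show Fin.cons (g.1.symm (g.1 (v 0)))
          (gact (ginv (g.2 (g.1.symm (g.1 (v 0))))) (gact (g.2 (v 0)) (Fin.tail v))) = v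
      simp only [Equiv.symm_apply_apply]
      rw [gact_ginv (g.2 (v 0)) (Fin.tail v)]
      exact Fin.cons_self_tail v

theorem gtrans : ∀ {n : ℕ} (u v : Fin n → Fin d), ∃ g : Aut d n, gact g u = v
  | 0, u, v => ⟨PUnit.unit, Subsingleton.elim _ _⟩
  | n + 1, u, v => by
      obtain ⟨g', hg'⟩ := gtrans (Fin.tail u) (Fin.tail v)
      refine ⟨(Equiv.swap (u 0) (v 0), fun i => if i = u 0 then g' else gone n), ?_⟩
      show Fin.cons (Equiv.swap (u 0) (v 0) (u 0))
        (gact (if u 0 = u 0 then g' else gone n) (Fin.tail u)) = v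
      rw [if_pos rfl, Equiv.swap_apply_left, hg']
      exact Fin.cons_self_tail v

end Aut

section PostPre
variable {d : ℕ}

instance {d : ℕ} : Subsingleton (Pn d 0) := inferInstanceAs (Subsingleton PUnit)

theorem Pn.act_mk_none {n : ℕ} {a : PInj (Fin d)} {f : {x : Fin d // (a.1 x).isSome} → Pn d n}
    {v : Fin (n+1) → Fin d} (h : a.1 (v 0) = none) : Pn.act (Pn.mk a f) v = none := by
  rw [Pn.act_mk, dif_neg]
  simp [h]

theorem Pn.act_mk_some {n : ℕ} {a : PInj (Fin d)} {f : {x : Fin d // (a.1 x).isSome} → Pn d n}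
    {v : Fin (n+1) → Fin d} {w₀ : Fin d} (h : a.1 (v 0) = some w₀) :
    Pn.act (Pn.mk a f) v
      = (Pn.act (f ⟨v 0, by simp [h]⟩) (Fin.tail v)).map (fun t => Fin.cons w₀ t) := by
  have hs : (a.1 (v 0)).isSome := by simp [h]
  rw [Pn.act_mk, dif_pos hs]
  simp only [h, Option.get_some]

/-- postcompose an element of `P_n` with a full automorphism -/
def post : ∀ {n : ℕ}, Aut d n → Pn d n → Pn d n
  | 0, _, _ => PUnit.unit
  | n + 1, g, y =>
      Pn.mk ⟨fun x => (y.1.1 x).map g.1, by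
          intro x x' z hx hx'
          rcases Option.map_eq_some_iff.mp hx with ⟨s, hs, rfl⟩
          rcases Option.map_eq_some_iff.mp hx' with ⟨s', hs', hss⟩
          have : s' = s := g.1.injective hss
          exact y.1.2 hs (this ▸ hs')⟩
        (fun x => post (g.2 ((y.1.1 x.1).get (by
            have := x.2; simpa using this)))
          (y.2 ⟨x.1, by have := x.2; simpa using this⟩))

theorem gact_succ {n : ℕ} (g : Aut d (n+1)) (v : Fin (n+1) → Fin d) :
    gact g v = Fin.cons (g.1 (v 0)) (gact (g.2 (v 0)) (Fin.tail v)) := rfl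

theorem act_post : ∀ {n : ℕ} (g : Aut d n) (y : Pn d n) (v : Fin n → Fin d),
    Pn.act (post g y) v = (Pn.act y v).map (gact g)
  | 0, _, y, v => rfl
  | n + 1, g, y, v => by
      obtain ⟨a, f⟩ := y
      show Pn.act (post g (Pn.mk a f)) v = (Pn.act (Pn.mk a f) v).map (gact g)
      rcases ha : a.1 (v 0) with _ | w₀
      · rw [Pn.act_mk_none ha]
        rw [show Pn.act (post g (Pn.mk a f)) v = none from
          Pn.act_mk_none (by show (a.1 (v 0)).map g.1 = none; simp [ha])]
        rfl
      · rw [Pn.act_mk_some ha]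
        rw [show (post g (Pn.mk a f)) = Pn.mk _ _ from rfl]
        rw [Pn.act_mk_some (w₀ := g.1 w₀) (by show (a.1 (v 0)).map g.1 = _; simp [ha])]
        have hget : ∀ (p : (a.1 (v 0)).isSome), (a.1 (v 0)).get p = w₀ := by
          intro p; simp [ha]
        dsimp only [Pn.mk]
        erw [hget]
        rw [act_post]
        rw [Option.map_map, Option.map_map]
        have hfun : (gact g ∘ fun t => Fin.cons w₀ t)
            = (fun t => Fin.cons (g.1 w₀) t) ∘ (gact (g.2 w₀)) := by
          funext x
          show gact g (Fin.cons w₀ x) = Fin.cons (g.1 w₀) (gact (g.2 w₀) x)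
          rw [gact_succ]
          simp
        rw [hfun]

theorem post_inj : ∀ {n : ℕ} (g : Aut d n), Function.Injective (post g)
  | 0, _ => fun _ _ _ => Subsingleton.elim _ _
  | n + 1, g => by
      intro y y' h
      obtain ⟨a, f⟩ := y
      obtain ⟨a', f'⟩ := y'
      have h1 : a = a' := by
        have := congrArg (fun p => p.1.1) h
        refine Subtype.ext (funext fun x => ?_)
        have hx := congrFun this x
        change (a.1 x).map g.1 = (a'.1 x).map g.1 at hx
        exact Option.map_injective g.1.injective hx
      subst h1
      have h2 : (post g (Pn.mk a f)).2 = (post g (Pn.mk a f')).2 :=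
        (Sigma.ext_iff.mp h).2.eq
      have h3 : f = f' := by
        funext x
        have := congrFun h2 ⟨x.1, by
          show ((a.1 x.1).map g.1).isSome; simpa using x.2⟩
        exact post_inj _ this
      rw [h3]

/-- precompose an element of `P_n` with a full automorphism -/
def pre : ∀ {n : ℕ}, Aut d n → Pn d n → Pn d n
  | 0, _, _ => PUnit.unit
  | n + 1, g, y =>
      Pn.mk ⟨fun x => y.1.1 (g.1 x), fun _ _ _ hx hx' => g.1.injective (y.1.2 hx hx')⟩
        (fun x => pre (g.2 x.1) (y.2 ⟨g.1 x.1, x.2⟩))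

theorem act_pre : ∀ {n : ℕ} (g : Aut d n) (y : Pn d n) (v : Fin n → Fin d),
    Pn.act (pre g y) v = Pn.act y (gact g v)
  | 0, _, y, v => by
      show some v = some (gact _ v); rfl
  | n + 1, g, y, v => by
      obtain ⟨a, f⟩ := y
      show Pn.act (Pn.mk _ _) v = Pn.act (Pn.mk a f) (gact g v)
      have h0 : (gact g v) 0 = g.1 (v 0) := by
        show (Fin.cons (g.1 (v 0)) _ : Fin (n+1) → Fin d) 0 = _; simp
      have ht : Fin.tail (gact g v) = gact (g.2 (v 0)) (Fin.tail v) := by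
        show Fin.tail (Fin.cons _ _) = _; simp
      rcases ha : a.1 (g.1 (v 0)) with _ | w₀
      · rw [Pn.act_mk_none (by show a.1 (g.1 (v 0)) = none; exact ha),
          Pn.act_mk_none (by rw [h0]; exact ha)]
      · rw [Pn.act_mk_some (w₀ := w₀) (by show a.1 (g.1 (v 0)) = some w₀; exact ha),
          Pn.act_mk_some (w₀ := w₀) (by rw [h0]; exact ha)]
        rw [act_pre, ht]
        simp only [h0]

theorem pre_inj : ∀ {n : ℕ} (g : Aut d n), Function.Injective (pre g)
  | 0, _ => fun _ _ _ => Subsingleton.elim _ _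
  | n + 1, g => by
      intro y y' h
      obtain ⟨a, f⟩ := y
      obtain ⟨a', f'⟩ := y'
      have h1 : a = a' := by
        have := congrArg (fun p => p.1.1) h
        refine Subtype.ext (funext fun x => ?_)
        have hx := congrFun this (g.1.symm x)
        have hx' : a.1 (g.1 (g.1.symm x)) = a'.1 (g.1 (g.1.symm x)) := hx
        rwa [Equiv.apply_symm_apply] at hx'
      subst h1
      have h2 : (pre g (Pn.mk a f)).2 = (pre g (Pn.mk a f')).2 :=
        (Sigma.ext_iff.mp h).2.eq
      have h3 : f = f' := by
        funext x
        have hmem : (a.1 (g.1 (g.1.symm x.1))).isSome := by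
          simpa using x.2
        have := congrFun h2 ⟨g.1.symm x.1, hmem⟩
        have h4 := pre_inj (g.2 (g.1.symm x.1)) this
        have h5 : (⟨g.1 (g.1.symm x.1), hmem⟩ : {x : Fin d // (a.1 x).isSome}) = x :=
          Subtype.ext (by simp)
        have h4' : f ⟨g.1 (g.1.symm x.1), hmem⟩ = f' ⟨g.1 (g.1.symm x.1), hmem⟩ := h4
        rwa [h5] at h4'
      rw [h3]

end PostPre

section Complete
variable {d : ℕ}

theorem perm_extend (a : PInj (Fin d)) :
    ∃ σ : Equiv.Perm (Fin d), ∀ x s, a.1 x = some s → σ x = s := by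
  classical
  set p : Fin d → Prop := fun x => (a.1 x).isSome with hp
  have hdec : DecidablePred p := fun x => inferInstanceAs (Decidable ((a.1 x).isSome = true))
  set φ : {x // p x} → Fin d := fun x => (a.1 x.1).get x.2 with hφ
  have hinj : Function.Injective φ := by
    intro x y hxy
    have hx : a.1 x.1 = some (φ x) := by simp [hφ]
    have hy : a.1 y.1 = some (φ y) := by simp [hφ]
    exact Subtype.ext (a.2 hx (hxy ▸ hy))
  have hcard : Fintype.card {x // ¬ p x} = Fintype.card ↥(Set.range φ)ᶜ := by
    rw [Fintype.card_subtype_compl, Fintype.card_compl_set,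
      Set.card_range_of_injective hinj]
  let e2 : {x // ¬ p x} ≃ ↥(Set.range φ)ᶜ := Fintype.equivOfCardEq hcard
  set σf : Fin d → Fin d := fun x => if h : p x then φ ⟨x, h⟩ else (e2 ⟨x, h⟩ : Fin d)
    with hσf
  have hσinj : Function.Injective σf := by
    intro x y hxy
    by_cases hx : p x <;> by_cases hy : p y
    · rw [hσf] at hxy; simp only [dif_pos hx, dif_pos hy] at hxy
      have := hinj (show φ ⟨x, hx⟩ = φ ⟨y, hy⟩ from hxy)
      exact congrArg Subtype.val this
    · exfalso
      rw [hσf] at hxy; simp only [dif_pos hx, dif_neg hy] at hxy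
      have h1 : (φ ⟨x, hx⟩ : Fin d) ∈ Set.range φ := ⟨_, rfl⟩
      have h2 := (e2 ⟨y, hy⟩).2
      rw [← hxy] at h2
      exact h2 h1
    · exfalso
      rw [hσf] at hxy; simp only [dif_neg hx, dif_pos hy] at hxy
      have h1 : (φ ⟨y, hy⟩ : Fin d) ∈ Set.range φ := ⟨_, rfl⟩
      have h2 := (e2 ⟨x, hx⟩).2
      rw [hxy] at h2
      exact h2 h1
    · rw [hσf] at hxy; simp only [dif_neg hx, dif_neg hy] at hxy
      have := e2.injective (Subtype.ext hxy)
      exact congrArg Subtype.val this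
  refine ⟨Equiv.ofBijective σf (Finite.injective_iff_bijective.mp hσinj), ?_⟩
  intro x s hx
  have hpx : p x := by simp [hp, hx]
  show σf x = s
  rw [hσf]
  simp only [dif_pos hpx]
  simp [hφ, hx]

theorem complete : ∀ {n : ℕ} (q : Pn d n),
    ∃ g : Aut d n, ∀ v s, Pn.act q v = some s → gact g v = s
  | 0, _ => ⟨PUnit.unit, fun v s h => Option.some_inj.mp h⟩
  | n + 1, q => by
      classical
      obtain ⟨a, f⟩ := q
      have hch : ∀ x : {x : Fin d // (a.1 x).isSome}, ∃ g' : Aut d n,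
          ∀ v s, Pn.act (f x) v = some s → gact g' v = s := fun x => complete (f x)
      choose ch hch using hch
      obtain ⟨σ, hσ⟩ := perm_extend a
      refine ⟨(σ, fun i => if h : (a.1 i).isSome then ch ⟨i, h⟩ else gone n), ?_⟩
      intro v s h
      have h' : Pn.act (Pn.mk a f) v = some s := h
      rcases ha : a.1 (v 0) with _ | w₀
      · rw [Pn.act_mk_none ha] at h'; cases h'
      · rw [Pn.act_mk_some ha] at h'
        obtain ⟨t, ht, hs⟩ := Option.map_eq_some_iff.mp h'
        show Fin.cons (σ (v 0)) (gact (if h : (a.1 (v 0)).isSome then ch ⟨v 0, h⟩ else gone n)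
          (Fin.tail v)) = s
        have h0 : (a.1 (v 0)).isSome := by simp [ha]
        simp only [dif_pos h0]
        rw [hσ (v 0) w₀ ha]
        rw [hch ⟨v 0, h0⟩ (Fin.tail v) t ht]
        exact hs

end Complete

section Counting
variable {d n : ℕ}

theorem actList_singleton (a : Pn d n) : actList [a] = Pn.act a := by
  funext x
  show (Pn.act a x).bind (fun t => some t) = Pn.act a x
  cases Pn.act a x <;> rfl

theorem pIter_conj {α : Type*} (e : α → α) (w w' : α → Option α)
    (hw' : ∀ x, w' (e x) = (w x).map e) : ∀ (m : ℕ) (x : α),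
    pIter w' m (e x) = (pIter w m x).map e
  | 0, x => rfl
  | m + 1, x => by
      show (w' (e x)).bind (pIter w' m) = ((w x).bind (pIter w m)).map e
      rw [hw' x]
      cases hx : w x with
      | none => rfl
      | some x' =>
          show pIter w' m (e x') = (pIter w m x').map e
          exact pIter_conj e w w' hw' m x'

theorem card_swap {A B : Type*} [Fintype A] [Fintype B] (P : A → B → Prop) :
    ∑ a : A, Nat.card {b // P a b} = ∑ b : B, Nat.card {a // P a b} := by
  classical
  have h1 : ∀ a, Nat.card {b // P a b}
      = ∑ b : B, if P a b then 1 else 0 := fun a => by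
    rw [Nat.card_eq_fintype_card, Fintype.card_subtype, Finset.card_filter]
  have h2 : ∀ b, Nat.card {a // P a b}
      = ∑ a : A, if P a b then 1 else 0 := fun b => by
    rw [Nat.card_eq_fintype_card, Fintype.card_subtype, Finset.card_filter]
  simp only [h1, h2]
  exact Finset.sum_comm

/-- homogeneity of the number of elements whose domain contains a given leaf -/
theorem homN (u v : Fin n → Fin d) :
    Nat.card {y : Pn d n // (Pn.act y u).isSome}
      = Nat.card {y : Pn d n // (Pn.act y v).isSome} := by
  classical
  have key : ∀ (u v : Fin n → Fin d) (g : Aut d n), gact g v = u →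
      Nat.card {y : Pn d n // (Pn.act y u).isSome}
        ≤ Nat.card {y : Pn d n // (Pn.act y v).isSome} := by
    intro u v g hg
    have : Function.Injective
        (fun y : {y : Pn d n // (Pn.act y u).isSome} =>
          (⟨pre g y.1, by rw [act_pre, hg]; exact y.2⟩ :
            {y : Pn d n // (Pn.act y v).isSome})) := by
      intro y y' h
      exact Subtype.ext (pre_inj g (Subtype.ext_iff.mp h))
    exact Nat.card_le_card_of_injective _ this
  obtain ⟨g, hg⟩ := gtrans v u
  exact le_antisymm (key u v g hg)
    (key v u (ginv g) (by rw [← hg, gact_ginv]))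

/-- homogeneity of the number of elements for which a given leaf is in `S(y)` -/
theorem homM (u v : Fin n → Fin d) :
    Nat.card {z : Pn d n // Sset (Pn.act z) u}
      = Nat.card {z : Pn d n // Sset (Pn.act z) v} := by
  classical
  have key : ∀ (u v : Fin n → Fin d) (g : Aut d n), gact g u = v →
      Nat.card {z : Pn d n // Sset (Pn.act z) u}
        ≤ Nat.card {z : Pn d n // Sset (Pn.act z) v} := by
    intro u v g hg
    have hmem : ∀ z : {z : Pn d n // Sset (Pn.act z) u},
        Sset (Pn.act (pre (ginv g) (post g z.1))) v := by
      intro z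
      have hw' : ∀ x, Pn.act (pre (ginv g) (post g z.1)) (gact g x)
          = (Pn.act z.1 x).map (gact g) := by
        intro x
        rw [act_pre, act_post, gact_ginv]
      intro m hm
      rw [← hg, pIter_conj (gact g) (Pn.act z.1) _ hw' m u]
      have := z.2 m hm
      cases hx : pIter (Pn.act z.1) m u with
      | none => rw [hx] at this; cases this
      | some t => rfl
    have : Function.Injective
        (fun z : {z : Pn d n // Sset (Pn.act z) u} =>
          (⟨pre (ginv g) (post g z.1), hmem z⟩ : {z : Pn d n // Sset (Pn.act z) v})) := by
      intro z z' h
      have h1 := pre_inj (ginv g) (Subtype.ext_iff.mp h)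
      exact Subtype.ext (post_inj g h1)
    exact Nat.card_le_card_of_injective _ this
  obtain ⟨g, hg⟩ := gtrans u v
  exact le_antisymm (key u v g hg) (key v u (ginv g) (by rw [← hg, gact_ginv]))

end Counting

section Claim
variable {d n : ℕ}

theorem main_claim (N M : ℕ)
    (hN : ∀ v : Fin n → Fin d, Nat.card {y : Pn d n // (Pn.act y v).isSome} = N)
    (hM : ∀ v : Fin n → Fin d, Nat.card {z : Pn d n // Sset (Pn.act z) v} = M) :
    ∀ (c : ℕ) (q : Pn d n) (v : Fin n → Fin d),
      Nat.card {y : Fin (c+1) → Pn d n //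
        Sset (pcomp (actList (List.ofFn y)) (Pn.act q)) v} ≤ N ^ c * M := by
  intro c
  induction c with
  | zero =>
      intro q v
      obtain ⟨g, hg⟩ := complete q
      have hmem : ∀ y : {y : Fin 1 → Pn d n //
          Sset (pcomp (actList (List.ofFn y)) (Pn.act q)) v},
          Sset (Pn.act (post g (y.1 0))) v := by
        intro y
        have hy := y.2
        have hl : List.ofFn y.1 = [y.1 0] := by
          rw [List.ofFn_succ]
          rfl
        rw [hl, actList_singleton] at hy
        refine Sset.of_orb ?_ hy
        intro x hx
        rcases hax : Pn.act (y.1 0) x with _ | t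
        · exfalso
          revert hx
          show ((Pn.act (y.1 0) x).bind (Pn.act q)).isSome → False
          rw [hax]; simp
        · have hqx : (Pn.act q t).isSome := by
            revert hx
            show ((Pn.act (y.1 0) x).bind (Pn.act q)).isSome → _
            rw [hax]; simp
          obtain ⟨s, hs⟩ := Option.isSome_iff_exists.mp hqx
          rw [act_post, hax]
          show some (gact g t) = (Pn.act (y.1 0) x).bind (Pn.act q)
          rw [hax]
          show some (gact g t) = Pn.act q t
          rw [hs, hg t s hs]
      have hinj : Function.Injective
          (fun y : {y : Fin 1 → Pn d n //
              Sset (pcomp (actList (List.ofFn y)) (Pn.act q)) v} =>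
            (⟨post g (y.1 0), hmem y⟩ : {z : Pn d n // Sset (Pn.act z) v})) := by
        intro y y' h
        have h1 := post_inj g (Subtype.ext_iff.mp h)
        refine Subtype.ext (funext fun i => ?_)
        have : i = 0 := Subsingleton.elim i 0
        rw [this]; exact h1
      calc Nat.card _ ≤ Nat.card {z : Pn d n // Sset (Pn.act z) v} :=
            Nat.card_le_card_of_injective _ hinj
        _ = M := hM v
        _ = N ^ 0 * M := by ring
  | succ c ih =>
      intro q v
      classical
      -- decompose a tuple as head and tail
      set T := {y : Fin (c+2) → Pn d n // Sset (pcomp (actList (List.ofFn y)) (Pn.act q)) v}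
        with hT
      have hcond : ∀ y : T, ∃ h0 : (Pn.act (y.1 0) v).isSome,
          Sset (pcomp (actList (List.ofFn (Fin.tail y.1)))
            (Pn.act (Pn.mul q (y.1 0)))) ((Pn.act (y.1 0) v).get h0) := by
        intro y
        have hy := y.2
        have hl : List.ofFn y.1 = y.1 0 :: List.ofFn (Fin.tail y.1) := List.ofFn_succ (f := y.1)
        rw [hl, actList_cons_pcomp] at hy
        obtain ⟨h0, hshift⟩ := Sset_shift hy
        rw [pcomp_actList_mul] at hshift
        exact ⟨h0, hshift⟩
      set Tgt := Σ a : {a : Pn d n // (Pn.act a v).isSome},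
        {t : Fin (c+1) → Pn d n //
          Sset (pcomp (actList (List.ofFn t)) (Pn.act (Pn.mul q a.1)))
            ((Pn.act a.1 v).get a.2)} with hTgt
      have hΦmem : ∀ y : T, Sset (pcomp (actList (List.ofFn (Fin.tail y.1)))
            (Pn.act (Pn.mul q (y.1 0)))) ((Pn.act (y.1 0) v).get (hcond y).choose) :=
        fun y => (hcond y).choose_spec
      set Φ : T → Tgt := fun y => ⟨⟨y.1 0, (hcond y).choose⟩, ⟨Fin.tail y.1, hΦmem y⟩⟩
        with hΦ
      have hΦinj : Function.Injective Φ := by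
        intro y y' h
        have h1 : y.1 0 = y'.1 0 := congrArg (fun p => p.1.1) h
        have h2 : Fin.tail y.1 = Fin.tail y'.1 := congrArg (fun p => p.2.1) h
        refine Subtype.ext ?_
        rw [← Fin.cons_self_tail y.1, ← Fin.cons_self_tail y'.1, h1, h2]
      have hcard1 : Nat.card T ≤ Nat.card Tgt := Nat.card_le_card_of_injective Φ hΦinj
      have hcard2 : Nat.card Tgt
          = ∑ a : {a : Pn d n // (Pn.act a v).isSome},
              Nat.card {t : Fin (c+1) → Pn d n //
                Sset (pcomp (actList (List.ofFn t)) (Pn.act (Pn.mul q a.1)))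
                  ((Pn.act a.1 v).get a.2)} := by
        rw [hTgt, Nat.card_eq_fintype_card, Fintype.card_sigma]
        exact Finset.sum_congr rfl fun a _ => (Nat.card_eq_fintype_card).symm
      have hcard3 : ∑ a : {a : Pn d n // (Pn.act a v).isSome},
            Nat.card {t : Fin (c+1) → Pn d n //
              Sset (pcomp (actList (List.ofFn t)) (Pn.act (Pn.mul q a.1)))
                ((Pn.act a.1 v).get a.2)}
          ≤ ∑ _a : {a : Pn d n // (Pn.act a v).isSome}, N ^ c * M :=
        Finset.sum_le_sum fun a _ => ih (Pn.mul q a.1) ((Pn.act a.1 v).get a.2)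
      have hcard4 : ∑ _a : {a : Pn d n // (Pn.act a v).isSome}, N ^ c * M
          = N ^ (c + 1) * M := by
        rw [Finset.sum_const, Finset.card_univ, ← Nat.card_eq_fintype_card, hN v,
          smul_eq_mul]
        ring
      calc Nat.card T ≤ Nat.card Tgt := hcard1
        _ = _ := hcard2
        _ ≤ _ := hcard3
        _ = N ^ (c+1) * M := hcard4

end Claim

/-- For `c ≥ 1`,
`Σ_{y_1, …, y_c ∈ P_n} rk (y_1 y_2 ⋯ y_c) ≤ (R'_n/d^n)^{c-1} · R_n`, where
`R_n = Σ_y rk y` and `R'_n = Σ_y rank y`. -/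
theorem sum_rk_product_le
    (d n c : ℕ) (hd : 2 ≤ d) (hn : 1 ≤ n) (hc : 1 ≤ c) :
    ∑ y : Fin c → Pn d n,
        (Pn.rk ((List.ofFn y).foldl Pn.mul (Pn.one d n)) : ℝ)
      ≤ ((∑ z : Pn d n, (Pn.rank' z : ℝ)) / (d : ℝ) ^ n) ^ (c - 1)
          * (∑ z : Pn d n, (Pn.rk z : ℝ)) := by
  classical
  obtain ⟨k, rfl⟩ : ∃ k, c = k + 1 := ⟨c - 1, by omega⟩
  have hd0 : 0 < d := by omega
  set v₀ : Fin n → Fin d := fun _ => ⟨0, hd0⟩ with hv₀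
  set N : ℕ := Nat.card {y : Pn d n // (Pn.act y v₀).isSome} with hNdef
  set M : ℕ := Nat.card {z : Pn d n // Sset (Pn.act z) v₀} with hMdef
  have hN : ∀ v : Fin n → Fin d, Nat.card {y : Pn d n // (Pn.act y v).isSome} = N :=
    fun v => homN v v₀
  have hM : ∀ v : Fin n → Fin d, Nat.card {z : Pn d n // Sset (Pn.act z) v} = M :=
    fun v => homM v v₀
  -- rewrite rk of a product via actList
  have hA : ∀ y : Fin (k+1) → Pn d n,
      Pn.rk ((List.ofFn y).foldl Pn.mul (Pn.one d n))
        = Nat.card {v : Fin n → Fin d // Sset (actList (List.ofFn y)) v} := by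
    intro y
    have hPact : Pn.act ((List.ofFn y).foldl Pn.mul (Pn.one d n))
        = actList (List.ofFn y) := funext (act_prodFn _)
    unfold Pn.rk
    rw [hPact]
    rfl
  have hB : ∑ y : Fin (k+1) → Pn d n, Pn.rk ((List.ofFn y).foldl Pn.mul (Pn.one d n))
      = ∑ v : Fin n → Fin d,
          Nat.card {y : Fin (k+1) → Pn d n // Sset (actList (List.ofFn y)) v} := by
    simp only [hA]
    exact card_swap (fun y v => Sset (actList (List.ofFn y)) v)
  have hC : ∀ v : Fin n → Fin d,
      Nat.card {y : Fin (k+1) → Pn d n // Sset (actList (List.ofFn y)) v}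
        ≤ N ^ k * M := by
    intro v
    have := main_claim N M hN hM k (Pn.one d n) v
    simpa only [pcomp_actList_one] using this
  have hcardV : Fintype.card (Fin n → Fin d) = d ^ n := by
    simp
  have hD : ∑ y : Fin (k+1) → Pn d n, Pn.rk ((List.ofFn y).foldl Pn.mul (Pn.one d n))
      ≤ d ^ n * (N ^ k * M) := by
    rw [hB]
    calc ∑ v : Fin n → Fin d,
          Nat.card {y : Fin (k+1) → Pn d n // Sset (actList (List.ofFn y)) v}
        ≤ ∑ _v : Fin n → Fin d, N ^ k * M := Finset.sum_le_sum fun v _ => hC v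
      _ = d ^ n * (N ^ k * M) := by
          rw [Finset.sum_const, Finset.card_univ, hcardV, smul_eq_mul]
  have hE : ∑ z : Pn d n, Pn.rank' z = d ^ n * N := by
    have : ∀ z : Pn d n, Pn.rank' z
        = Nat.card {v : Fin n → Fin d // (Pn.act z v).isSome} := fun z => rfl
    simp only [this]
    rw [card_swap (fun z v => (Pn.act z v).isSome)]
    simp only [hN]
    rw [Finset.sum_const, Finset.card_univ, hcardV, smul_eq_mul]
  have hF : ∑ z : Pn d n, Pn.rk z = d ^ n * M := by
    have : ∀ z : Pn d n, Pn.rk z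
        = Nat.card {v : Fin n → Fin d // Sset (Pn.act z) v} := fun z => rfl
    simp only [this]
    rw [card_swap (fun z v => Sset (Pn.act z) v)]
    simp only [hM]
    rw [Finset.sum_const, Finset.card_univ, hcardV, smul_eq_mul]
  -- pass to the reals
  have hdR : ((d : ℝ) ^ n) ≠ 0 := by positivity
  have e1 : ∑ y : Fin (k+1) → Pn d n,
      (Pn.rk ((List.ofFn y).foldl Pn.mul (Pn.one d n)) : ℝ)
      = ((∑ y : Fin (k+1) → Pn d n,
          Pn.rk ((List.ofFn y).foldl Pn.mul (Pn.one d n)) : ℕ) : ℝ) := by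
    push_cast
    rfl
  have e2 : ∑ z : Pn d n, (Pn.rank' z : ℝ) = ((d ^ n * N : ℕ) : ℝ) := by
    rw [← hE]; push_cast; rfl
  have e3 : ∑ z : Pn d n, (Pn.rk z : ℝ) = ((d ^ n * M : ℕ) : ℝ) := by
    rw [← hF]; push_cast; rfl
  rw [e1, e2, e3]
  have hk : (k + 1) - 1 = k := rfl
  rw [hk]
  have hrhs : (((d ^ n * N : ℕ) : ℝ) / (d : ℝ) ^ n) ^ k * ((d ^ n * M : ℕ) : ℝ)
      = ((d ^ n * (N ^ k * M) : ℕ) : ℝ) := by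
    push_cast
    rw [mul_comm ((d:ℝ)^n) (N:ℝ), mul_div_assoc, div_self hdR, mul_one]
    ring
  rw [hrhs]
  exact Nat.cast_le.mpr hD
end
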